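/- arXiv:2603.28469 — 3 statements merged into one kernel-verified Lean document; each statement's English description precedes it below -/
import Mathlib

section
/- Let n ≥ 1, q ∈ ℍ^n, and let ω be a purely imaginary quaternion. Then the quaternion 1 + |q|² + ω has real part 1 + |q|² ≥ 1, hence is invertible, and the point C(q,ω) = ((1+|q|²+ω)^{-1}(2q), (1+|q|²+ω)^{-1}(1−|q|²−ω)) ∈ ℍ^{n+1} lies on the unit sphere S^{4n+3}, i.e. |C(q,ω)| = 1. -/
/-! Because `ω` is purely imaginary, `‖r + ω‖² = r² + ‖ω‖²` for real `r`, and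
`‖A⁻¹ x‖² = ‖x‖² / ‖A‖²`. With `s = |q|²` the claim therefore reduces to the real identity
`4 s + (1 - s)² = (1 + s)²`. -/

namespace Quaternion

theorem sq_norm_coe_add_of_re_eq_zero (r : ℝ) {ω : ℍ} (hω : ω.re = 0) :
    ‖(r : ℍ) + ω‖ ^ 2 = r ^ 2 + ‖ω‖ ^ 2 := by
  simp only [sq, ← normSq_eq_norm_mul_self, normSq_add, normSq_coe]
  simp [hω]

theorem norm_two : ‖(2 : ℍ)‖ = 2 := by
  rw [show (2 : ℍ) = ((2 : ℝ) : ℍ) by norm_cast, norm_coe, Real.norm_two]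

theorem sq_norm_inv_mul (a x : ℍ) : ‖a⁻¹ * x‖ ^ 2 = ‖x‖ ^ 2 / ‖a‖ ^ 2 := by
  rw [norm_mul, norm_inv, mul_pow, inv_pow, inv_mul_eq_div]

theorem sq_norm_cayley_numerator (s : ℝ) {ω : ℍ} (hω : ω.re = 0) :
    4 * s + ‖((1 - s : ℝ) : ℍ) - ω‖ ^ 2 = ‖((1 + s : ℝ) : ℍ) + ω‖ ^ 2 := by
  have hω' : (-ω).re = 0 := by rw [re_neg, hω, neg_zero]
  rw [sub_eq_add_neg, sq_norm_coe_add_of_re_eq_zero _ hω', norm_neg,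
    sq_norm_coe_add_of_re_eq_zero _ hω]
  ring

end Quaternion

open Quaternion

theorem stmt7_general (n : ℕ) (q : Fin n → Quaternion ℝ) (ω : Quaternion ℝ)
    (hω : ω.re = 0)
    (A : Quaternion ℝ) (hA : A = (((1 + ∑ ℓ, ‖q ℓ‖ ^ 2 : ℝ)) : Quaternion ℝ) + ω) :
    A.re = 1 + ∑ ℓ, ‖q ℓ‖ ^ 2 ∧
    1 ≤ A.re ∧
    IsUnit A ∧
    (∑ ℓ, ‖A⁻¹ * (2 * q ℓ)‖ ^ 2) +
      ‖A⁻¹ * ((((1 - ∑ ℓ, ‖q ℓ‖ ^ 2 : ℝ)) : Quaternion ℝ) - ω)‖ ^ 2 = 1 := by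
  set s := ∑ ℓ, ‖q ℓ‖ ^ 2
  have hs : 0 ≤ s := by positivity
  have hre : A.re = 1 + s := by simp [hA, hω]
  have hA0 : A ≠ 0 := fun h => by simp [h] at hre; linarith
  refine ⟨hre, by linarith, hA0.isUnit, ?_⟩
  have h2q : ∑ ℓ, ‖2 * q ℓ‖ ^ 2 = 4 * s := by
    simp only [norm_mul, mul_pow, Quaternion.norm_two, ← Finset.mul_sum, s]
    norm_num
  simp_rw [sq_norm_inv_mul, ← Finset.sum_div, ← add_div,
    div_eq_one_iff_eq (pow_ne_zero 2 (norm_ne_zero_iff.2 hA0)), h2q, hA]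
  exact sq_norm_cayley_numerator s hω

/-- For `q ∈ ℍ^n` and a purely imaginary quaternion `ω`, the quaternion `1 + |q|² + ω`
has real part `1 + |q|² ≥ 1`, hence is invertible, and the quaternionic Cayley transform
`C(q,ω) = ((1+|q|²+ω)⁻¹(2q), (1+|q|²+ω)⁻¹(1−|q|²−ω))` lies on the unit sphere
`S^{4n+3}`, i.e. `|C(q,ω)| = 1`. -/
theorem stmt7 (n : ℕ) (hn : 1 ≤ n) (q : Fin n → Quaternion ℝ) (ω : Quaternion ℝ)
    (hω : ω.re = 0)
    (A : Quaternion ℝ) (hA : A = (((1 + ∑ ℓ, ‖q ℓ‖ ^ 2 : ℝ)) : Quaternion ℝ) + ω) :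
    A.re = 1 + ∑ ℓ, ‖q ℓ‖ ^ 2 ∧
    1 ≤ A.re ∧
    IsUnit A ∧
    (∑ ℓ, ‖A⁻¹ * (2 * q ℓ)‖ ^ 2) +
      ‖A⁻¹ * ((((1 - ∑ ℓ, ‖q ℓ‖ ^ 2 : ℝ)) : Quaternion ℝ) - ω)‖ ^ 2 = 1 :=
  stmt7_general n q ω hω A hA
end

section
/- Let n ≥ 1, q ∈ ℍ^n, and let ω be a purely imaginary quaternion. Write C(q,ω) = (ζ', ζ_{n+1}) ∈ ℍ^n × ℍ. Then 1 + ζ_{n+1} is invertible and C^{-1}(C(q,ω)) = (q, ω), i.e. (1+ζ_{n+1})^{-1}ζ' = q and Im((1+ζ_{n+1})^{-1}(1−ζ_{n+1})) = ω. -/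
/-!
With `s = |q|²` and `A = 1 + s + ω`, the two numerators `2q` and `1 - s - ω` give
`1 + ζ_{n+1} = A⁻¹ · 2` and `1 - ζ_{n+1} = A⁻¹ · 2(s + ω)`, so the common left factor `A⁻¹`
cancels in both components of `C⁻¹`, leaving `q` and `s + ω`, whose imaginary part is `ω`.
`A` is invertible because its real part is `1 + s > 0`.
-/

open Quaternion Finset

section DivisionRing

variable {D : Type*} [DivisionRing D]

theorem one_add_inv_mul {a : D} (ha : a ≠ 0) (b : D) : 1 + a⁻¹ * b = a⁻¹ * (a + b) := by
  rw [mul_add, inv_mul_cancel₀ ha]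

theorem one_sub_inv_mul {a : D} (ha : a ≠ 0) (b : D) : 1 - a⁻¹ * b = a⁻¹ * (a - b) := by
  rw [mul_sub, inv_mul_cancel₀ ha]

theorem inv_inv_mul_mul_inv_mul {a : D} (ha : a ≠ 0) (b c : D) :
    (a⁻¹ * b)⁻¹ * (a⁻¹ * c) = b⁻¹ * c := by
  rw [mul_inv_rev, inv_inv, mul_assoc, mul_inv_cancel_left₀ ha]

variable {t ω : D}

theorem one_add_cayley (h : 1 + t + ω ≠ 0) :
    1 + (1 + t + ω)⁻¹ * (1 - t - ω) = (1 + t + ω)⁻¹ * 2 := by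
  rw [one_add_inv_mul h, ← one_add_one_eq_two]
  abel_nf

theorem one_sub_cayley (h : 1 + t + ω ≠ 0) :
    1 - (1 + t + ω)⁻¹ * (1 - t - ω) = (1 + t + ω)⁻¹ * (2 * (t + ω)) := by
  rw [one_sub_inv_mul h, two_mul]
  abel_nf

end DivisionRing

namespace Quaternion

instance charZero {R : Type*} [CommRing R] [CharZero R] : CharZero ℍ[R] :=
  ⟨fun _ _ h => by simpa using congrArg (·.re) h⟩

theorem im_eq_self_of_re_eq_zero {ω : ℍ} (hω : ω.re = 0) : ω.im = ω :=
  (sub_eq_zero.mp (by rw [sub_im_self, hω, Quaternion.coe_zero])).symm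

theorem one_add_coe_add_ne_zero {s : ℝ} (hs : 0 ≤ s) {ω : ℍ} (hω : ω.re = 0) :
    1 + (s : ℍ) + ω ≠ 0 := fun h => by
  have hre := congrArg (·.re) h
  simp only [re_add, re_one, re_coe, hω, re_zero] at hre
  linarith

end Quaternion

theorem stmt8_general (n : ℕ) (q : Fin n → Quaternion ℝ) (ω : Quaternion ℝ)
    (hω : ω.re = 0)
    (A : Quaternion ℝ) (hA : A = (((1 + ∑ ℓ, ‖q ℓ‖ ^ 2 : ℝ)) : Quaternion ℝ) + ω)
    (ζ' : Fin n → Quaternion ℝ) (hζ' : ∀ ℓ, ζ' ℓ = A⁻¹ * (2 * q ℓ))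
    (ζlast : Quaternion ℝ)
    (hζlast : ζlast = A⁻¹ * ((((1 - ∑ ℓ, ‖q ℓ‖ ^ 2 : ℝ)) : Quaternion ℝ) - ω)) :
    IsUnit (1 + ζlast) ∧
    (∀ ℓ, (1 + ζlast)⁻¹ * ζ' ℓ = q ℓ) ∧
    ((1 + ζlast)⁻¹ * (1 - ζlast)).im = ω := by
  set s : ℝ := ∑ ℓ, ‖q ℓ‖ ^ 2
  have hA0 : 1 + (s : ℍ) + ω ≠ 0 :=
    one_add_coe_add_ne_zero (sum_nonneg fun ℓ _ => by positivity) hω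
  push_cast at hA hζlast
  subst hA hζlast
  refine ⟨?_, fun ℓ => ?_, ?_⟩
  · rw [one_add_cayley hA0]
    exact (mul_ne_zero (inv_ne_zero hA0) two_ne_zero).isUnit
  · rw [hζ', one_add_cayley hA0, inv_inv_mul_mul_inv_mul hA0, inv_mul_cancel_left₀ two_ne_zero]
  · rw [one_add_cayley hA0, one_sub_cayley hA0, inv_inv_mul_mul_inv_mul hA0,
      inv_mul_cancel_left₀ two_ne_zero, im_add, im_coe, zero_add, im_eq_self_of_re_eq_zero hω]

/-- `C⁻¹ ∘ C = id`: for `q ∈ ℍ^n` and purely imaginary `ω`, writing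
`C(q,ω) = (ζ', ζ_{n+1})`, the quaternion `1 + ζ_{n+1}` is invertible,
`(1+ζ_{n+1})⁻¹ ζ' = q`, and `Im((1+ζ_{n+1})⁻¹(1−ζ_{n+1})) = ω`. -/
theorem stmt8 (n : ℕ) (hn : 1 ≤ n) (q : Fin n → Quaternion ℝ) (ω : Quaternion ℝ)
    (hω : ω.re = 0)
    (A : Quaternion ℝ) (hA : A = (((1 + ∑ ℓ, ‖q ℓ‖ ^ 2 : ℝ)) : Quaternion ℝ) + ω)
    (ζ' : Fin n → Quaternion ℝ) (hζ' : ∀ ℓ, ζ' ℓ = A⁻¹ * (2 * q ℓ))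
    (ζlast : Quaternion ℝ)
    (hζlast : ζlast = A⁻¹ * ((((1 - ∑ ℓ, ‖q ℓ‖ ^ 2 : ℝ)) : Quaternion ℝ) - ω)) :
    IsUnit (1 + ζlast) ∧
    (∀ ℓ, (1 + ζlast)⁻¹ * ζ' ℓ = q ℓ) ∧
    ((1 + ζlast)⁻¹ * (1 - ζlast)).im = ω :=
  stmt8_general n q ω hω A hA ζ' hζ' ζlast hζlast
end

section
/- Let n ≥ 1 and let ζ = (ζ', ζ_{n+1}) ∈ ℍ^n × ℍ lie on the unit sphere S^{4n+3} with ζ_{n+1} ≠ −1. Then 1 + ζ_{n+1} is invertible, the pair C^{-1}(ζ) = ((1+ζ_{n+1})^{-1}ζ', Im((1+ζ_{n+1})^{-1}(1−ζ_{n+1}))) lies in ℍ^n × Im ℍ, and C(C^{-1}(ζ)) = ζ. -/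
/-!
With `w = (1 + ζₙ₊₁)⁻¹ (1 - ζₙ₊₁)` we have `ω = Im w`, and on the sphere `Re w = |q|²`, so
`|q|² + ω = w`. In any division ring `1 + w = 2 (1 + ζₙ₊₁)⁻¹` and `1 - w = 2 (1 + ζₙ₊₁)⁻¹ ζₙ₊₁`,
so applying `C` only multiplies `2 (1 + ζₙ₊₁)⁻¹ ζ'` and `2 (1 + ζₙ₊₁)⁻¹ ζₙ₊₁` by the inverse of
`2 (1 + ζₙ₊₁)⁻¹`.
-/

open Quaternion Finset

section DivisionRing

variable {R : Type*} [DivisionRing R] {z : R}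

theorem one_add_inv_one_add_mul_one_sub (hz : 1 + z ≠ 0) :
    1 + (1 + z)⁻¹ * (1 - z) = 2 * (1 + z)⁻¹ := by
  rw [show 1 - z = 2 - (1 + z) by rw [← one_add_one_eq_two]; abel, mul_sub,
    inv_mul_cancel₀ hz, (Commute.ofNat_left 2 _).eq]
  abel

theorem one_sub_inv_one_add_mul_one_sub (hz : 1 + z ≠ 0) :
    1 - (1 + z)⁻¹ * (1 - z) = 2 * (1 + z)⁻¹ * z :=
  calc 1 - (1 + z)⁻¹ * (1 - z) = 2 - (1 + (1 + z)⁻¹ * (1 - z)) := by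
        rw [← one_add_one_eq_two]; abel
    _ = 2 * (1 + z)⁻¹ * (1 + z) - 2 * (1 + z)⁻¹ := by
      rw [one_add_inv_one_add_mul_one_sub hz, mul_assoc, inv_mul_cancel₀ hz, mul_one]
    _ = 2 * (1 + z)⁻¹ * z := by rw [mul_add, mul_one, add_sub_cancel_left]

end DivisionRing

namespace Quaternion

theorem re_star_one_add_mul_one_sub (z : ℍ[ℝ]) :
    (star (1 + z) * (1 - z)).re = 1 - normSq z := by
  have h : star (1 + z) * (1 - z) = 1 - star z * z + (star z - z) := by
    rw [star_add, star_one]; noncomm_ring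
  rw [h, star_mul_self]
  simp only [re_add, re_sub, re_one, re_coe, re_star, sub_self, add_zero]

theorem re_inv_one_add_mul_one_sub (z : ℍ[ℝ]) :
    ((1 + z)⁻¹ * (1 - z)).re = (1 - ‖z‖ ^ 2) / ‖1 + z‖ ^ 2 := by
  rw [inv_def, smul_mul_assoc, re_smul, re_star_one_add_mul_one_sub, sq, sq,
    ← normSq_eq_norm_mul_self, ← normSq_eq_norm_mul_self, smul_eq_mul, inv_mul_eq_div]

theorem sum_norm_inv_mul_sq {ι : Type*} (s : Finset ι) (a : ℍ[ℝ]) (x : ι → ℍ[ℝ]) :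
    ∑ i ∈ s, ‖a⁻¹ * x i‖ ^ 2 = (∑ i ∈ s, ‖x i‖ ^ 2) / ‖a‖ ^ 2 := by
  simp_rw [norm_mul, norm_inv, mul_pow, inv_pow, ← Finset.mul_sum]
  ring

end Quaternion

theorem stmt9_general (n : ℕ) (ζ' : Fin n → Quaternion ℝ) (ζlast : Quaternion ℝ)
    (hsphere : (∑ ℓ, ‖ζ' ℓ‖ ^ 2) + ‖ζlast‖ ^ 2 = 1) (hpole : ζlast ≠ -1)
    (q : Fin n → Quaternion ℝ) (hq : ∀ ℓ, q ℓ = (1 + ζlast)⁻¹ * ζ' ℓ)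
    (ω : Quaternion ℝ) (hω : ω = ((1 + ζlast)⁻¹ * (1 - ζlast)).im) :
    IsUnit (1 + ζlast) ∧
    ω.re = 0 ∧
    (∀ ℓ, ((((1 + ∑ m, ‖q m‖ ^ 2 : ℝ)) : Quaternion ℝ) + ω)⁻¹ * (2 * q ℓ) = ζ' ℓ) ∧
    ((((1 + ∑ m, ‖q m‖ ^ 2 : ℝ)) : Quaternion ℝ) + ω)⁻¹ *
        ((((1 - ∑ m, ‖q m‖ ^ 2 : ℝ)) : Quaternion ℝ) - ω) = ζlast := by
  have hne : 1 + ζlast ≠ 0 := fun h => hpole (eq_neg_of_add_eq_zero_right h)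
  set w := (1 + ζlast)⁻¹ * (1 - ζlast)
  have hsum : ∑ m, ‖q m‖ ^ 2 = w.re := by
    simp_rw [hq]
    rw [sum_norm_inv_mul_sq, re_inv_one_add_mul_one_sub, ← hsphere, add_sub_cancel_right]
  have hsplit : ((∑ m, ‖q m‖ ^ 2 : ℝ) : ℍ[ℝ]) + ω = w := by rw [hsum, hω, re_add_im]
  have hden : ((1 + ∑ m, ‖q m‖ ^ 2 : ℝ) : ℍ[ℝ]) + ω = 2 * (1 + ζlast)⁻¹ := by
    rw [Quaternion.coe_add, Quaternion.coe_one, add_assoc, hsplit,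
      one_add_inv_one_add_mul_one_sub hne]
  have hnum : ((1 - ∑ m, ‖q m‖ ^ 2 : ℝ) : ℍ[ℝ]) - ω = 2 * (1 + ζlast)⁻¹ * ζlast := by
    rw [Quaternion.coe_sub, Quaternion.coe_one, sub_sub, hsplit,
      one_sub_inv_one_add_mul_one_sub hne]
  have htwo : (2 : ℍ[ℝ]) ≠ 0 := map_ofNat (algebraMap ℝ ℍ[ℝ]) 2 ▸ (map_ne_zero _).2 two_ne_zero
  have hden_ne : 2 * (1 + ζlast)⁻¹ ≠ 0 := mul_ne_zero htwo (inv_ne_zero hne)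
  refine ⟨hne.isUnit, by rw [hω, re_im], fun ℓ => ?_, ?_⟩
  · rw [hden, hq, ← mul_assoc 2, inv_mul_cancel_left₀ hden_ne]
  · rw [hden, hnum, inv_mul_cancel_left₀ hden_ne]

/-- `C ∘ C⁻¹ = id` on the sphere minus the pole: if `ζ = (ζ', ζ_{n+1}) ∈ S^{4n+3}` with
`ζ_{n+1} ≠ −1`, then `1 + ζ_{n+1}` is invertible, `C⁻¹(ζ)` lies in `ℍ^n × Im ℍ`
(its second component is purely imaginary), and `C(C⁻¹(ζ)) = ζ`. -/
theorem stmt9 (n : ℕ) (hn : 1 ≤ n) (ζ' : Fin n → Quaternion ℝ) (ζlast : Quaternion ℝ)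
    (hsphere : (∑ ℓ, ‖ζ' ℓ‖ ^ 2) + ‖ζlast‖ ^ 2 = 1) (hpole : ζlast ≠ -1)
    (q : Fin n → Quaternion ℝ) (hq : ∀ ℓ, q ℓ = (1 + ζlast)⁻¹ * ζ' ℓ)
    (ω : Quaternion ℝ) (hω : ω = ((1 + ζlast)⁻¹ * (1 - ζlast)).im) :
    IsUnit (1 + ζlast) ∧
    ω.re = 0 ∧
    (∀ ℓ, ((((1 + ∑ m, ‖q m‖ ^ 2 : ℝ)) : Quaternion ℝ) + ω)⁻¹ * (2 * q ℓ) = ζ' ℓ) ∧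
    ((((1 + ∑ m, ‖q m‖ ^ 2 : ℝ)) : Quaternion ℝ) + ω)⁻¹ *
        ((((1 - ∑ m, ‖q m‖ ^ 2 : ℝ)) : Quaternion ℝ) - ω) = ζlast :=
  stmt9_general n ζ' ζlast hsphere hpole q hq ω hω
end
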